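/- arXiv:2102.00476 — 5 statements merged into one kernel-verified Lean document; each statement's English description precedes it below -/
import Mathlib

section
/- The order of runs does not affect the Grundy value of GA1: if two bit strings have sequences of run lengths that are permutations of each other, then the two GA1 positions have the same Grundy value. -/
/-- The minimum excludant of a set of naturals. -/
noncomputable def mex (S : Set ℕ) : ℕ := sInf {n : ℕ | n ∉ S}

/-- The entropy of a bit string: the number of adjacent pairs of unequal bits. -/
def entropy (b : List Bool) : ℕ := (b.zip b.tail).countP fun p => p.1 != p.2

/-- Crossover at position `k` (1-indexed): flip bits `b₁,…,b_k`. -/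
def ga1Crossover (k : ℕ) (b : List Bool) : List Bool := (b.take k).map (! ·) ++ b.drop k

/-- Mutation at (0-indexed) position `i`: flip bit `i`. -/
def ga1Mutate (i : ℕ) (b : List Bool) : List Bool := b.set i (!(b.getD i false))

/-- The legal moves of GA1: a crossover or a mutation that strictly increases entropy. -/
def ga1Move (b b' : List Bool) : Prop :=
  ((∃ k, 1 ≤ k ∧ k ≤ b.length - 1 ∧ b' = ga1Crossover k b) ∨
    (∃ i, i < b.length ∧ b' = ga1Mutate i b)) ∧
  entropy b < entropy b'

/-- Helper for computing run lengths: `cur` is the current bit, `cnt` the length of the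
current run so far. -/
def runLengthsAux (cur : Bool) (cnt : ℕ) : List Bool → List ℕ
  | [] => [cnt]
  | a :: rest => if a = cur then runLengthsAux cur (cnt + 1) rest
                 else cnt :: runLengthsAux a 1 rest

/-- The sequence of run lengths of a bit string (a run is a maximal constant sub-string). -/
def runLengths : List Bool → List ℕ
  | [] => []
  | a :: rest => runLengthsAux a 1 rest

/-!
A bit string is determined by its first bit and its run lengths, and its entropy is the number
of runs minus one. Hence a legal move splits one run into two (a crossover inside the run, or a
mutation of an end bit of the string) or into three with a singleton in the middle (a mutation
strictly inside the run): every other crossover or mutation merges runs or keeps their number.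
Such a split can be made wherever the run sits, so "the run lengths are a permutation of each
other" is a bisimulation of the game graph, and solutions of the mex recursion on a well-founded
game are invariant under bisimulation.
-/

theorem grundy_eq_of_simulation {α : Type*} {move : α → α → Prop}
    (hwf : WellFounded (flip move)) {g : α → ℕ}
    (hg : ∀ a, g a = mex {m | ∃ a', move a a' ∧ m = g a'})
    {R : α → α → Prop} (hR : ∀ a b, R a b → R b a)
    (hsim : ∀ a b a', R a b → move a a' → ∃ b', move b b' ∧ R a' b')
    {a b : α} (hab : R a b) : g a = g b := by
  induction a using hwf.induction generalizing b with
  | _ a ih =>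
    rw [hg a, hg b]
    congr 1
    ext m
    constructor
    · rintro ⟨a', ha', rfl⟩
      obtain ⟨b', hb', hab'⟩ := hsim a b a' hab ha'
      exact ⟨b', hb', ih a' ha' hab'⟩
    · rintro ⟨b', hb', rfl⟩
      obtain ⟨a', ha', hba'⟩ := hsim b a b' (hR a b hab) hb'
      exact ⟨a', ha', (ih a' ha' (hR b' a' hba')).symm⟩

/-- Inverse of `runLengths` once the first bit `v` is fixed. Zero entries are allowed; they merge
their neighbours (`fromRuns_merge`). -/
def fromRuns (v : Bool) : List ℕ → List Bool
  | [] => []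
  | r :: rs => List.replicate r v ++ fromRuns (!v) rs

section fromRuns

variable (v : Bool)

@[simp] lemma fromRuns_nil : fromRuns v [] = [] := rfl

@[simp] lemma fromRuns_cons (r : ℕ) (l : List ℕ) :
    fromRuns v (r :: l) = List.replicate r v ++ fromRuns (!v) l := rfl

@[simp] lemma length_fromRuns (l : List ℕ) : (fromRuns v l).length = l.sum := by
  induction l generalizing v <;> simp [*]

lemma fromRuns_append_zero (l : List ℕ) : fromRuns v (l ++ [0]) = fromRuns v l := by
  induction l generalizing v <;> simp [*]

lemma fromRuns_merge (l₁ : List ℕ) (p q : ℕ) (l₂ : List ℕ) :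
    fromRuns v (l₁ ++ p :: 0 :: q :: l₂) = fromRuns v (l₁ ++ (p + q) :: l₂) := by
  induction l₁ generalizing v <;> simp [*, ← List.append_assoc]

lemma head?_fromRuns {r : ℕ} (hr : 0 < r) (l : List ℕ) :
    (fromRuns v (r :: l)).head? = some v := by
  obtain ⟨r, rfl⟩ := Nat.exists_eq_add_one_of_ne_zero hr.ne'
  simp [List.replicate_succ]

lemma runLengthsAux_replicate_append (c m : ℕ) (x : List Bool) :
    runLengthsAux v c (List.replicate m v ++ x) = runLengthsAux v (c + m) x := by
  induction m generalizing c with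
  | zero => simp
  | succ m ih => simp [List.replicate_succ, runLengthsAux, ih, Nat.add_assoc, Nat.add_comm 1]

lemma runLengthsAux_fromRuns_not (c : ℕ) {l : List ℕ} (hl : 0 ∉ l) :
    runLengthsAux v c (fromRuns (!v) l) = c :: l := by
  induction l generalizing v c with
  | nil => rfl
  | cons r l ih =>
    obtain ⟨r, rfl⟩ := Nat.exists_eq_add_one_of_ne_zero (Ne.symm (List.ne_of_not_mem_cons hl))
    have := ih (!v) (1 + r) (List.not_mem_of_not_mem_cons hl)
    simp_all [List.replicate_succ, runLengthsAux, runLengthsAux_replicate_append, Nat.add_comm]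

lemma runLengths_fromRuns {l : List ℕ} (hl : 0 ∉ l) : runLengths (fromRuns v l) = l := by
  cases l with
  | nil => rfl
  | cons r l =>
    obtain ⟨r, rfl⟩ := Nat.exists_eq_add_one_of_ne_zero (Ne.symm (List.ne_of_not_mem_cons hl))
    have := runLengthsAux_fromRuns_not v (1 + r) (List.not_mem_of_not_mem_cons hl)
    simp_all [List.replicate_succ, runLengths, runLengthsAux_replicate_append, Nat.add_comm]

end fromRuns

lemma exists_eq_fromRuns (b : List Bool) : ∃ v l, 0 ∉ l ∧ b = fromRuns v l := by
  induction b with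
  | nil => exact ⟨false, [], by simp, rfl⟩
  | cons a b ih =>
    obtain ⟨v, l, hl, rfl⟩ := ih
    cases l with
    | nil => exact ⟨a, [1], by simp, by simp⟩
    | cons r l =>
      by_cases hav : a = v
      · subst hav
        exact ⟨a, (r + 1) :: l, by simp_all, by simp [List.replicate_succ]⟩
      · exact ⟨a, 1 :: r :: l, by simp_all, by simp [Bool.eq_not_of_ne hav]⟩

@[simp] lemma entropy_nil : entropy [] = 0 := rfl

lemma entropy_cons (a : Bool) (x : List Bool) :
    entropy (a :: x) = entropy x + if x.head? = some (!a) then 1 else 0 := by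
  cases x with
  | nil => rfl
  | cons b x => cases a <;> cases b <;> simp [entropy]

@[simp] lemma entropy_cons_self (a : Bool) (x : List Bool) :
    entropy (a :: a :: x) = entropy (a :: x) := by
  simp [entropy_cons a]

lemma entropy_le_length (b : List Bool) : entropy b ≤ b.length :=
  (List.countP_le_length ..).trans (by simp)

lemma entropy_replicate_append {m : ℕ} (hm : 0 < m) (v : Bool) (x : List Bool) :
    entropy (List.replicate m v ++ x) = entropy (v :: x) := by
  obtain ⟨m, rfl⟩ := Nat.exists_eq_add_one_of_ne_zero hm.ne'
  induction m with
  | zero => simp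
  | succ m ih =>
    rw [List.replicate_succ, List.cons_append, ← ih m.succ_pos, List.replicate_succ,
      List.cons_append, entropy_cons_self]

lemma entropy_fromRuns (v : Bool) {l : List ℕ} (hl : 0 ∉ l) :
    entropy (fromRuns v l) = l.length - 1 := by
  induction l generalizing v with
  | nil => rfl
  | cons r l ih =>
    have hr : 0 < r := Nat.pos_of_ne_zero (Ne.symm (List.ne_of_not_mem_cons hl))
    have hl' := List.not_mem_of_not_mem_cons hl
    rw [fromRuns_cons, entropy_replicate_append hr, entropy_cons, ih _ hl']
    cases l with
    | nil => simp
    | cons s l =>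
      have hs : 0 < s := Nat.pos_of_ne_zero (Ne.symm (List.ne_of_not_mem_cons hl'))
      rw [head?_fromRuns _ hs]
      simp

lemma entropy_fromRuns_le (v : Bool) (l : List ℕ) : entropy (fromRuns v l) ≤ l.length - 1 := by
  induction l generalizing v with
  | nil => rfl
  | cons r l ih =>
    rcases Nat.eq_zero_or_pos r with rfl | hr
    · simpa using (ih (!v)).trans (Nat.sub_le _ _)
    · rw [fromRuns_cons, entropy_replicate_append hr, entropy_cons]
      cases l with
      | nil => simp
      | cons s l =>
        have := ih (!v)
        simp only [List.length_cons, Nat.add_sub_cancel] at this ⊢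
        split <;> omega

lemma length_ga1Crossover (k : ℕ) (b : List Bool) : (ga1Crossover k b).length = b.length := by
  simp only [ga1Crossover, List.length_append, List.length_map, List.length_take,
    List.length_drop]
  omega

lemma length_ga1Mutate (i : ℕ) (b : List Bool) : (ga1Mutate i b).length = b.length := by
  simp [ga1Mutate]

lemma ga1Move.length_eq {b b' : List Bool} (h : ga1Move b b') : b'.length = b.length := by
  obtain ⟨⟨k, -, -, rfl⟩ | ⟨i, -, rfl⟩, -⟩ := h
  · exact length_ga1Crossover k b
  · exact length_ga1Mutate i b

lemma wellFounded_flip_ga1Move : WellFounded (flip ga1Move) :=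
  (measure fun b : List Bool => b.length - entropy b).wf.mono fun b' b h => by
    have := entropy_le_length b'
    have := h.length_eq
    have := h.2
    show b'.length - entropy b' < b.length - entropy b
    omega

lemma ga1Crossover_replicate_append (m k : ℕ) (v : Bool) (x : List Bool) :
    ga1Crossover (m + k) (List.replicate m v ++ x) = List.replicate m (!v) ++ ga1Crossover k x := by
  unfold ga1Crossover
  simp [List.take_append, List.drop_append]

lemma ga1Mutate_replicate_append (m i : ℕ) (v : Bool) (x : List Bool) :
    ga1Mutate (m + i) (List.replicate m v ++ x) = List.replicate m v ++ ga1Mutate i x := by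
  simp [ga1Mutate, List.getD_eq_getElem?_getD, List.getElem?_append_right,
    List.set_append_right]

lemma ga1Crossover_fromRuns (v : Bool) (l₁ : List ℕ) (a c : ℕ) (l₂ : List ℕ) :
    ga1Crossover (l₁.sum + a) (fromRuns v (l₁ ++ (a + c) :: l₂)) =
      fromRuns (!v) (l₁ ++ a :: c :: l₂) := by
  induction l₁ generalizing v with
  | nil =>
    rw [List.nil_append, fromRuns_cons, List.replicate_add, List.append_assoc]
    simp [ga1Crossover]
  | cons r l₁ ih =>
    simp [Nat.add_assoc, ga1Crossover_replicate_append, ih]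

lemma ga1Mutate_fromRuns (v : Bool) (l₁ : List ℕ) (a c : ℕ) (l₂ : List ℕ) :
    ga1Mutate (l₁.sum + a) (fromRuns v (l₁ ++ (a + 1 + c) :: l₂)) =
      fromRuns v (l₁ ++ a :: 1 :: c :: l₂) := by
  induction l₁ generalizing v with
  | nil =>
    rw [List.nil_append, fromRuns_cons, List.replicate_add, List.replicate_add,
      List.append_assoc, List.append_assoc]
    simp [ga1Mutate]
  | cons r l₁ ih =>
    simp [Nat.add_assoc, ga1Mutate_replicate_append, ← ih]

lemma List.exists_eq_append_cons_of_lt_sum {l : List ℕ} {i : ℕ} (hi : i < l.sum) :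
    ∃ l₁ a c l₂, l = l₁ ++ (a + 1 + c) :: l₂ ∧ i = l₁.sum + a := by
  induction l generalizing i with
  | nil => simp at hi
  | cons r l ih =>
    by_cases hir : i < r
    · exact ⟨[], i, r - 1 - i, l, by simp; omega, by simp⟩
    · obtain ⟨l₁, a, c, l₂, rfl, hi'⟩ := ih (i := i - r) (by simp only [List.sum_cons] at hi; omega)
      exact ⟨r :: l₁, a, c, l₂, rfl, by simp only [List.sum_cons]; omega⟩

/-- The ways a legal move can replace a run of length `r`: split it in two, or flip a bit
strictly inside it. -/
def RunSplit (r : ℕ) (mid : List ℕ) : Prop :=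
  ∃ a c, 0 < a ∧ 0 < c ∧ (r = a + c ∧ mid = [a, c] ∨ r = a + 1 + c ∧ mid = [a, 1, c])

def RunMove (l L : List ℕ) : Prop :=
  ∃ l₁ r l₂ mid, RunSplit r mid ∧ l = l₁ ++ r :: l₂ ∧ L = l₁ ++ mid ++ l₂

lemma RunMove.exists_perm {l l' L : List ℕ} (hl : l.Perm l') (h : RunMove l L) :
    ∃ L', RunMove l' L' ∧ L.Perm L' := by
  obtain ⟨l₁, r, l₂, mid, hr, rfl, rfl⟩ := h
  obtain ⟨s, t, rfl⟩ := List.append_of_mem (a := r) (hl.subset (by simp))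
  have hst : (l₁ ++ l₂).Perm (s ++ t) :=
    (List.perm_middle.symm.trans (hl.trans List.perm_middle)).cons_inv
  refine ⟨s ++ mid ++ t, ⟨s, r, t, mid, hr, rfl, rfl⟩, ?_⟩
  simpa only [List.append_assoc] using
    ((List.perm_append_comm_assoc l₁ mid l₂).trans (hst.append_left mid)).trans
      (List.perm_append_comm_assoc s mid t).symm

section RunMove

variable {v : Bool} {l : List ℕ}

lemma runMove_of_ga1Crossover (hl : 0 ∉ l) {k : ℕ} (hk₁ : 1 ≤ k) (hk : k < l.sum)
    (hent : entropy (fromRuns v l) < entropy (ga1Crossover k (fromRuns v l))) :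
    RunMove l (runLengths (ga1Crossover k (fromRuns v l))) := by
  obtain ⟨l₁, a, c, l₂, rfl, hka⟩ :=
    List.exists_eq_append_cons_of_lt_sum (l := l) (i := k - 1) (by omega)
  obtain rfl : k = l₁.sum + (a + 1) := by omega
  rw [ga1Crossover_fromRuns] at hent ⊢
  rw [entropy_fromRuns v hl] at hent
  rcases Nat.eq_zero_or_pos c with rfl | hc
  · -- crossing at a run boundary merges two runs
    obtain ⟨q, l₂, rfl⟩ := List.exists_cons_of_ne_nil (l := l₂) (by rintro rfl; simp at hk)
    have := entropy_fromRuns_le (!v) (l₁ ++ (a + 1 + q) :: l₂)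
    rw [fromRuns_merge] at hent
    simp only [List.length_append, List.length_cons] at this hent
    omega
  · rw [runLengths_fromRuns _ (by simp_all [hc.ne])]
    exact ⟨l₁, a + 1 + c, l₂, [a + 1, c], ⟨a + 1, c, by omega, hc, Or.inl ⟨rfl, rfl⟩⟩, rfl,
      by simp⟩

lemma runMove_of_ga1Mutate (hl : 0 ∉ l) {i : ℕ} (hi : i < l.sum)
    (hent : entropy (fromRuns v l) < entropy (ga1Mutate i (fromRuns v l))) :
    RunMove l (runLengths (ga1Mutate i (fromRuns v l))) := by
  obtain ⟨l₁, a, c, l₂, rfl, rfl⟩ := List.exists_eq_append_cons_of_lt_sum hi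
  rw [ga1Mutate_fromRuns] at hent ⊢
  rw [entropy_fromRuns v hl] at hent
  -- flipping the first or last bit of a run that has a neighbour run merges it into that run
  have hl₁ : a = 0 → l₁ = [] := by
    rintro rfl
    rcases l₁.eq_nil_or_concat' with h | ⟨l₁, p, rfl⟩
    · exact h
    have := entropy_fromRuns_le v (l₁ ++ (p + 1) :: c :: l₂)
    simp only [List.append_assoc, List.singleton_append, fromRuns_merge] at hent
    simp only [List.length_append, List.length_cons] at this hent
    omega
  have hl₂ : c = 0 → l₂ = [] := by
    rintro rfl
    rcases l₂ with _ | ⟨q, l₂⟩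
    · rfl
    have := entropy_fromRuns_le v (l₁ ++ [a] ++ (1 + q) :: l₂)
    rw [show l₁ ++ a :: 1 :: 0 :: q :: l₂ = l₁ ++ [a] ++ 1 :: 0 :: q :: l₂ by simp,
      fromRuns_merge] at hent
    simp only [List.length_append, List.length_cons, List.length_nil] at this hent
    omega
  rcases Nat.eq_zero_or_pos a with rfl | ha <;> rcases Nat.eq_zero_or_pos c with rfl | hc
  · simp [hl₁ rfl, hl₂ rfl, entropy] at hent
  · obtain rfl := hl₁ rfl
    have hRL : runLengths (fromRuns v (0 :: 1 :: c :: l₂)) = 1 :: c :: l₂ :=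
      runLengths_fromRuns (!v) (by simp_all [hc.ne])
    simp only [List.nil_append, hRL]
    exact ⟨[], 0 + 1 + c, l₂, [1, c], ⟨1, c, one_pos, hc, Or.inl ⟨by omega, rfl⟩⟩, rfl, rfl⟩
  · obtain rfl := hl₂ rfl
    rw [show l₁ ++ [a, 1, 0] = (l₁ ++ [a, 1]) ++ [0] by simp, fromRuns_append_zero,
      runLengths_fromRuns _ (by simp_all [ha.ne])]
    exact ⟨l₁, a + 1 + 0, [], [a, 1], ⟨a, 1, ha, one_pos, Or.inl ⟨rfl, rfl⟩⟩, rfl, by simp⟩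
  · rw [runLengths_fromRuns _ (by simp_all [ha.ne, hc.ne])]
    exact ⟨l₁, a + 1 + c, l₂, [a, 1, c], ⟨a, c, ha, hc, Or.inr ⟨rfl, rfl⟩⟩, rfl, by simp⟩

lemma RunMove.exists_ga1Move (hl : 0 ∉ l) {L : List ℕ} (h : RunMove l L) :
    ∃ b', ga1Move (fromRuns v l) b' ∧ runLengths b' = L := by
  obtain ⟨l₁, r, l₂, mid, ⟨a, c, ha, hc, ⟨rfl, rfl⟩ | ⟨rfl, rfl⟩⟩, rfl, rfl⟩ := h
  · have hL : 0 ∉ l₁ ++ a :: c :: l₂ := by simp_all [ha.ne, hc.ne]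
    refine ⟨_, ⟨.inl ⟨l₁.sum + a, by omega, ?_, rfl⟩, ?_⟩, ?_⟩
    · simp only [length_fromRuns, List.sum_append, List.sum_cons]; omega
    · rw [ga1Crossover_fromRuns, entropy_fromRuns _ hl, entropy_fromRuns _ hL]
      simp
    · rw [ga1Crossover_fromRuns, runLengths_fromRuns _ hL]
      simp
  · have hL : 0 ∉ l₁ ++ a :: 1 :: c :: l₂ := by simp_all [ha.ne, hc.ne]
    refine ⟨_, ⟨.inr ⟨l₁.sum + a, ?_, rfl⟩, ?_⟩, ?_⟩
    · simp only [length_fromRuns, List.sum_append, List.sum_cons]; omega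
    · rw [ga1Mutate_fromRuns, entropy_fromRuns _ hl, entropy_fromRuns _ hL]
      simp
    · rw [ga1Mutate_fromRuns, runLengths_fromRuns _ hL]
      simp

end RunMove

lemma runMove_runLengths_of_ga1Move {b b' : List Bool} (h : ga1Move b b') :
    RunMove (runLengths b) (runLengths b') := by
  obtain ⟨v, l, hl, rfl⟩ := exists_eq_fromRuns b
  rw [runLengths_fromRuns v hl]
  obtain ⟨⟨k, hk₁, hk, rfl⟩ | ⟨i, hi, rfl⟩, hent⟩ := h
  · exact runMove_of_ga1Crossover hl hk₁ (by simp at hk; omega) hent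
  · exact runMove_of_ga1Mutate hl (by simpa using hi) hent

lemma RunMove.exists_ga1Move_runLengths {b : List Bool} {L : List ℕ}
    (h : RunMove (runLengths b) L) : ∃ b', ga1Move b b' ∧ runLengths b' = L := by
  obtain ⟨v, l, hl, rfl⟩ := exists_eq_fromRuns b
  rw [runLengths_fromRuns v hl] at h
  exact h.exists_ga1Move hl

/-- The order of runs does not affect the Grundy value of GA1: if two bit
strings have sequences of run lengths that are permutations of each other, then the two GA1
positions have the same Grundy value. -/
theorem ga1_grundy_ignores_run_order
    (g : List Bool → ℕ)
    (hg : ∀ b, g b = mex {m | ∃ b', ga1Move b b' ∧ m = g b'})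
    (b₁ b₂ : List Bool)
    (h : (runLengths b₁).Perm (runLengths b₂)) :
    g b₁ = g b₂ := by
  refine grundy_eq_of_simulation wellFounded_flip_ga1Move hg
    (R := fun b₁ b₂ => (runLengths b₁).Perm (runLengths b₂)) (fun _ _ h => h.symm) ?_ h
  intro b₁ b₂ b₁' hperm hmove
  obtain ⟨L, hL, hperm'⟩ := (runMove_runLengths_of_ga1Move hmove).exists_perm hperm
  obtain ⟨b₂', hmove₂, rfl⟩ := hL.exists_ga1Move_runLengths
  exact ⟨b₂', hmove₂, hperm'⟩
end

section
/- In GA2, a two-heap position with heaps of sizes h_1, h_2 ≥ 1 has Grundy value (h_1 + h_2 + 1) mod 3. -/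
/-- The moves of GA2 in heap form: positions are finite multisets of positive integers
(heaps), and a move either replaces one heap by two positive integers summing to it,
replaces one heap by three positive integers summing to it, or simultaneously replaces two
heaps, each by two positive integers summing to it. -/
def ga2Move (H H' : Multiset ℕ) : Prop :=
  (∃ h a b : ℕ, h ∈ H ∧ 0 < a ∧ 0 < b ∧ a + b = h ∧
      H' = H.erase h + {a, b}) ∨
  (∃ h a b c : ℕ, h ∈ H ∧ 0 < a ∧ 0 < b ∧ 0 < c ∧ a + b + c = h ∧
      H' = H.erase h + {a, b, c}) ∨
  (∃ h k a b c d : ℕ, h ∈ H ∧ k ∈ H.erase h ∧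
      0 < a ∧ 0 < b ∧ 0 < c ∧ 0 < d ∧ a + b = h ∧ c + d = k ∧
      H' = (H.erase h).erase k + {a, b, c, d})

lemma mex_eq_of (S : Set ℕ) (k : ℕ) (h1 : k ∉ S) (h2 : ∀ j < k, j ∈ S) : mex S = k := by
  refine le_antisymm (Nat.sInf_le h1) (le_csInf ⟨k, h1⟩ ?_)
  intro m hm
  by_contra hlt
  exact hm (h2 m (by omega))

lemma ga2_card_le_sum (H : Multiset ℕ) (h : ∀ x ∈ H, 0 < x) : Multiset.card H ≤ H.sum := by
  induction H using Multiset.induction with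
  | empty => simp
  | cons a s ih =>
    have h1 := h a (Multiset.mem_cons_self a s)
    have h2 : Multiset.card s ≤ s.sum := ih fun x hx => h x (Multiset.mem_cons_of_mem hx)
    simp only [Multiset.card_cons, Multiset.sum_cons]
    omega

lemma ga2_exists_two (H : Multiset ℕ) (hp : ∀ x ∈ H, 0 < x)
    (hs : Multiset.card H + 1 ≤ H.sum) : ∃ h ∈ H, 2 ≤ h := by
  by_contra hcon
  push_neg at hcon
  have : H.sum ≤ Multiset.card H := by
    clear hs
    induction H using Multiset.induction with
    | empty => simp
    | cons a s ih =>
      have h1 := hp a (Multiset.mem_cons_self a s)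
      have h2 := hcon a (Multiset.mem_cons_self a s)
      have h3 : s.sum ≤ Multiset.card s :=
        ih (fun x hx => hp x (Multiset.mem_cons_of_mem hx))
          (fun x hx => hcon x (Multiset.mem_cons_of_mem hx))
      simp only [Multiset.card_cons, Multiset.sum_cons]
      omega
  omega

lemma ga2_move_spec (H H' : Multiset ℕ) (hp : ∀ x ∈ H, 0 < x) (hm : ga2Move H H') :
    (∀ x ∈ H', 0 < x) ∧ H'.sum = H.sum ∧
      (Multiset.card H' = Multiset.card H + 1 ∨ Multiset.card H' = Multiset.card H + 2) := by
  rcases hm with ⟨h, a, b, hh, ha, hb, hab, hH'⟩ |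
    ⟨h, a, b, c, hh, ha, hb, hc, habc, hH'⟩ |
    ⟨h, k, a, b, c, d, hh, hk, ha, hb, hc, hd, hab, hcd, hH'⟩
  · have hcons : h ::ₘ H.erase h = H := Multiset.cons_erase hh
    subst hH'
    refine ⟨?_, ?_, ?_⟩
    · intro x hx
      rcases Multiset.mem_add.1 hx with hx | hx
      · exact hp x (Multiset.mem_of_mem_erase hx)
      · simp only [Multiset.insert_eq_cons, Multiset.mem_cons, Multiset.mem_singleton] at hx
        rcases hx with rfl | rfl <;> assumption
    · have : H.sum = h + (H.erase h).sum := by rw [← hcons]; simp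
      simp [Multiset.sum_add, this]
      omega
    · left
      have : Multiset.card H = (Multiset.card (H.erase h)) + 1 := by rw [← hcons]; simp
      simp [this]
  · have hcons : h ::ₘ H.erase h = H := Multiset.cons_erase hh
    subst hH'
    refine ⟨?_, ?_, ?_⟩
    · intro x hx
      rcases Multiset.mem_add.1 hx with hx | hx
      · exact hp x (Multiset.mem_of_mem_erase hx)
      · simp only [Multiset.insert_eq_cons, Multiset.mem_cons, Multiset.mem_singleton] at hx
        rcases hx with rfl | rfl | rfl <;> assumption
    · have : H.sum = h + (H.erase h).sum := by rw [← hcons]; simp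
      simp [Multiset.sum_add, this]
      omega
    · right
      have : Multiset.card H = (Multiset.card (H.erase h)) + 1 := by rw [← hcons]; simp
      simp [this]
  · have hcons1 : h ::ₘ H.erase h = H := Multiset.cons_erase hh
    have hcons2 : k ::ₘ (H.erase h).erase k = H.erase h := Multiset.cons_erase hk
    subst hH'
    refine ⟨?_, ?_, ?_⟩
    · intro x hx
      rcases Multiset.mem_add.1 hx with hx | hx
      · exact hp x (Multiset.mem_of_mem_erase (Multiset.mem_of_mem_erase hx))
      · simp only [Multiset.insert_eq_cons, Multiset.mem_cons, Multiset.mem_singleton] at hx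
        rcases hx with rfl | rfl | rfl | rfl <;> assumption
    · have e1 : H.sum = h + (H.erase h).sum := by rw [← hcons1]; simp
      have e2 : (H.erase h).sum = k + ((H.erase h).erase k).sum := by rw [← hcons2]; simp
      simp [Multiset.sum_add, e1, e2]
      omega
    · right
      have e1 : Multiset.card H = Multiset.card (H.erase h) + 1 := by rw [← hcons1]; simp
      have e2 : Multiset.card (H.erase h) = Multiset.card ((H.erase h).erase k) + 1 := by
        rw [← hcons2]; simp
      simp [e1, e2]

lemma ga2_grundy_general (g : Multiset ℕ → ℕ)
    (hg : ∀ H, g H = mex {m | ∃ H', ga2Move H H' ∧ m = g H'}) :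
    ∀ n H, (∀ x ∈ H, 0 < x) → H.sum = Multiset.card H + n → g H = n % 3 := by
  intro n
  induction n using Nat.strong_induction_on with
  | _ n IH =>
  intro H hp hs
  rw [hg]
  set S : Set ℕ := {m | ∃ H', ga2Move H H' ∧ m = g H'} with hS
  -- every option's value
  have hval : ∀ m ∈ S, (1 ≤ n ∧ m = (n - 1) % 3) ∨ (2 ≤ n ∧ m = (n - 2) % 3) := by
    rintro m ⟨H', hmove, rfl⟩
    obtain ⟨hp', hsum, hcard⟩ := ga2_move_spec H H' hp hmove
    have hcs : Multiset.card H' ≤ H'.sum := ga2_card_le_sum H' hp'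
    rcases hcard with h1 | h1
    · have hn : 1 ≤ n := by omega
      exact Or.inl ⟨hn, IH (n - 1) (by omega) H' hp' (by omega)⟩
    · have hn : 2 ≤ n := by omega
      exact Or.inr ⟨hn, IH (n - 2) (by omega) H' hp' (by omega)⟩
  -- move of type 1 exists when 1 ≤ n
  have hmove1 : 1 ≤ n → (n - 1) % 3 ∈ S := by
    intro hn
    obtain ⟨h, hh, h2⟩ := ga2_exists_two H hp (by omega)
    set H' : Multiset ℕ := H.erase h + {1, h - 1} with hH'
    have hmove : ga2Move H H' := Or.inl ⟨h, 1, h - 1, hh, by omega, by omega, by omega, rfl⟩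
    refine ⟨H', hmove, ?_⟩
    obtain ⟨hp', hsum, hcard⟩ := ga2_move_spec H H' hp hmove
    have hcardH' : Multiset.card H' = Multiset.card H + 1 := by
      have : Multiset.card H = Multiset.card (H.erase h) + 1 := by
        rw [← Multiset.cons_erase hh]; simp
      simp [hH', this]
    exact (IH (n - 1) (by omega) H' hp' (by omega)).symm
  -- move decreasing by 2 exists when 2 ≤ n
  have hmove2 : 2 ≤ n → (n - 2) % 3 ∈ S := by
    intro hn
    by_cases h3 : ∃ h ∈ H, 3 ≤ h
    · obtain ⟨h, hh, h3⟩ := h3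
      set H' : Multiset ℕ := H.erase h + {1, 1, h - 2} with hH'
      have hmove : ga2Move H H' :=
        Or.inr (Or.inl ⟨h, 1, 1, h - 2, hh, by omega, by omega, by omega, by omega, rfl⟩)
      refine ⟨H', hmove, ?_⟩
      obtain ⟨hp', hsum, _⟩ := ga2_move_spec H H' hp hmove
      have hcardH' : Multiset.card H' = Multiset.card H + 2 := by
        have : Multiset.card H = Multiset.card (H.erase h) + 1 := by
          rw [← Multiset.cons_erase hh]; simp
        simp [hH', this]
      exact (IH (n - 2) (by omega) H' hp' (by omega)).symm
    · push_neg at h3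
      obtain ⟨h, hh, h2⟩ := ga2_exists_two H hp (by omega)
      have hh3 : h ≤ 2 := by have := h3 h hh; omega
      have hpe : ∀ x ∈ H.erase h, 0 < x := fun x hx => hp x (Multiset.mem_of_mem_erase hx)
      have hcardE : Multiset.card H = Multiset.card (H.erase h) + 1 := by
        rw [← Multiset.cons_erase hh]; simp
      have hsumE : H.sum = h + (H.erase h).sum := by
        rw [← Multiset.cons_erase hh]; simp
      obtain ⟨k, hk, k2⟩ := ga2_exists_two (H.erase h) hpe (by omega)
      set H' : Multiset ℕ := (H.erase h).erase k + {1, h - 1, 1, k - 1} with hH'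
      have hmove : ga2Move H H' :=
        Or.inr (Or.inr ⟨h, k, 1, h - 1, 1, k - 1, hh, hk, by omega, by omega, by omega,
          by omega, by omega, by omega, rfl⟩)
      refine ⟨H', hmove, ?_⟩
      obtain ⟨hp', hsum, _⟩ := ga2_move_spec H H' hp hmove
      have hcardH' : Multiset.card H' = Multiset.card H + 2 := by
        have e2 : Multiset.card (H.erase h) = Multiset.card ((H.erase h).erase k) + 1 := by
          rw [← Multiset.cons_erase hk]; simp
        simp [hH', hcardE, e2]
      exact (IH (n - 2) (by omega) H' hp' (by omega)).symm
  rcases Nat.lt_or_ge n 1 with hn | hn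
  · -- n = 0 : no moves
    have hn0 : n = 0 := by omega
    subst hn0
    refine mex_eq_of S 0 ?_ (fun j hj => absurd hj (by omega))
    intro h0
    rcases hval 0 h0 with ⟨h1, _⟩ | ⟨h2, _⟩ <;> omega
  rcases Nat.lt_or_ge n 2 with hn2 | hn2
  · -- n = 1
    have hn1 : n = 1 := by omega
    subst hn1
    refine mex_eq_of S 1 ?_ ?_
    · intro h1
      rcases hval 1 h1 with ⟨_, he⟩ | ⟨h2, _⟩ <;> omega
    · intro j hj
      have : j = 0 := by omega
      subst this
      simpa using hmove1 (by omega)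
  · -- 2 ≤ n
    refine mex_eq_of S (n % 3) ?_ ?_
    · intro hmem
      rcases hval _ hmem with ⟨_, he⟩ | ⟨_, he⟩ <;> omega
    · intro j hj
      have hj1 : j = (n - 1) % 3 ∨ j = (n - 2) % 3 := by omega
      rcases hj1 with rfl | rfl
      · exact hmove1 (by omega)
      · exact hmove2 hn2

/-- In GA2, a two-heap position with heaps of sizes `h₁, h₂ ≥ 1` has Grundy
value `(h₁ + h₂ + 1) mod 3`. -/
theorem ga2_grundy_two_heaps
    (g : Multiset ℕ → ℕ)
    (hg : ∀ H, g H = mex {m | ∃ H', ga2Move H H' ∧ m = g H'})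
    (h₁ h₂ : ℕ) (hh₁ : 1 ≤ h₁) (hh₂ : 1 ≤ h₂) :
    g ({h₁, h₂} : Multiset ℕ) = (h₁ + h₂ + 1) % 3 := by
  have := ga2_grundy_general g hg (h₁ + h₂ - 2) {h₁, h₂} ?_ ?_
  · rw [this]; omega
  · intro x hx
    simp only [Multiset.insert_eq_cons, Multiset.mem_cons, Multiset.mem_singleton] at hx
    rcases hx with rfl | rfl <;> omega
  · simp only [Multiset.insert_eq_cons, Multiset.sum_cons, Multiset.sum_singleton,
      Multiset.card_cons, Multiset.card_singleton]
    omega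
end

section
/- In GA2, a three-heap position with heaps of sizes h_1, h_2, h_3 ≥ 1 has Grundy value (h_1 + h_2 + h_3) mod 3. -/
lemma mex_eq (S : Set ℕ) (k : ℕ) (hk : k ∉ S) (h : ∀ j < k, j ∈ S) : mex S = k := by
  refine le_antisymm (Nat.sInf_le hk) (le_csInf ⟨k, hk⟩ ?_)
  intro m hm
  by_contra hlt
  exact hm (h m (by omega))

lemma card_le_sum (H : Multiset ℕ) (h : ∀ x ∈ H, 0 < x) : H.card ≤ H.sum := by
  simpa using Multiset.card_nsmul_le_sum (a := 1) h

lemma erase_sum_card {H : Multiset ℕ} {h : ℕ} (hh : h ∈ H) :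
    (H.erase h).sum + h = H.sum ∧ (H.erase h).card + 1 = H.card := by
  constructor
  · conv_rhs => rw [← Multiset.cons_erase hh]
    rw [Multiset.sum_cons]; ring
  · conv_rhs => rw [← Multiset.cons_erase hh]
    rw [Multiset.card_cons]

/-- facts about a move from an all-positive position -/
lemma move_facts {H H' : Multiset ℕ} (hpos : ∀ x ∈ H, 0 < x) (hm : ga2Move H H') :
    (∀ x ∈ H', 0 < x) ∧ H'.sum = H.sum ∧
      ((H'.card = H.card + 1 ∧ H.card + 1 ≤ H.sum) ∨
       (H'.card = H.card + 2 ∧ H.card + 2 ≤ H.sum)) := by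
  rcases hm with ⟨h, a, b, hh, ha, hb, hab, hE⟩ |
    ⟨h, a, b, c, hh, ha, hb, hc, habc, hE⟩ |
    ⟨h, k, a, b, c, d, hh, hk, ha, hb, hc, hd, hab, hcd, hE⟩
  · obtain ⟨hs, hcard⟩ := erase_sum_card hh
    have hce := card_le_sum (H.erase h) (fun x hx => hpos x (Multiset.mem_of_mem_erase hx))
    subst hE
    refine ⟨?_, ?_, Or.inl ⟨?_, ?_⟩⟩
    · intro x hx
      rcases Multiset.mem_add.1 hx with hx | hx
      · exact hpos x (Multiset.mem_of_mem_erase hx)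
      · simp only [Multiset.insert_eq_cons, Multiset.mem_cons, Multiset.mem_singleton] at hx
        rcases hx with rfl | rfl <;> assumption
    · simp only [Multiset.sum_add]
      simp only [Multiset.insert_eq_cons, Multiset.sum_cons, Multiset.sum_singleton]
      omega
    · simp only [Multiset.card_add]
      simp only [Multiset.insert_eq_cons, Multiset.card_cons, Multiset.card_singleton]
      omega
    · omega
  · obtain ⟨hs, hcard⟩ := erase_sum_card hh
    have hce := card_le_sum (H.erase h) (fun x hx => hpos x (Multiset.mem_of_mem_erase hx))
    subst hE
    refine ⟨?_, ?_, Or.inr ⟨?_, ?_⟩⟩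
    · intro x hx
      rcases Multiset.mem_add.1 hx with hx | hx
      · exact hpos x (Multiset.mem_of_mem_erase hx)
      · simp only [Multiset.insert_eq_cons, Multiset.mem_cons, Multiset.mem_singleton] at hx
        rcases hx with rfl | rfl | rfl <;> assumption
    · simp only [Multiset.sum_add]
      simp only [Multiset.insert_eq_cons, Multiset.sum_cons, Multiset.sum_singleton]
      omega
    · simp only [Multiset.card_add]
      simp only [Multiset.insert_eq_cons, Multiset.card_cons, Multiset.card_singleton]
      omega
    · omega
  · obtain ⟨hs, hcard⟩ := erase_sum_card hh
    obtain ⟨hs2, hcard2⟩ := erase_sum_card hk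
    have hce := card_le_sum ((H.erase h).erase k)
      (fun x hx => hpos x (Multiset.mem_of_mem_erase (Multiset.mem_of_mem_erase hx)))
    subst hE
    refine ⟨?_, ?_, Or.inr ⟨?_, ?_⟩⟩
    · intro x hx
      rcases Multiset.mem_add.1 hx with hx | hx
      · exact hpos x (Multiset.mem_of_mem_erase (Multiset.mem_of_mem_erase hx))
      · simp only [Multiset.insert_eq_cons, Multiset.mem_cons, Multiset.mem_singleton] at hx
        rcases hx with rfl | rfl | rfl | rfl <;> assumption
    · simp only [Multiset.sum_add]
      simp only [Multiset.insert_eq_cons, Multiset.sum_cons, Multiset.sum_singleton]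
      omega
    · simp only [Multiset.card_add]
      simp only [Multiset.insert_eq_cons, Multiset.card_cons, Multiset.card_singleton]
      omega
    · omega

lemma exists_big (H : Multiset ℕ) (hpos : ∀ x ∈ H, 0 < x) (hlt : H.card < H.sum) :
    ∃ h ∈ H, 2 ≤ h := by
  by_contra hc
  push_neg at hc
  have : H.sum ≤ H.card * 1 := by
    simpa using Multiset.sum_le_card_nsmul H 1 (fun x hx => by
      have := hpos x hx; have := hc x hx; omega)
  omega

lemma ga2_grundy (g : Multiset ℕ → ℕ)
    (hg : ∀ H, g H = mex {m | ∃ H', ga2Move H H' ∧ m = g H'}) :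
    ∀ r : ℕ, ∀ H : Multiset ℕ, (∀ x ∈ H, 0 < x) → H.sum = H.card + r → g H = r % 3 := by
  intro r
  induction r using Nat.strong_induction_on with
  | _ r IH =>
  intro H hpos hsum
  rw [hg H]
  set S : Set ℕ := {m | ∃ H', ga2Move H H' ∧ m = g H'} with hS
  -- every option value is (r-1)%3 (with r≥1) or (r-2)%3 (with r≥2)
  have hoptval : ∀ m ∈ S, (1 ≤ r ∧ m = (r-1) % 3) ∨ (2 ≤ r ∧ m = (r-2) % 3) := by
    rintro m ⟨H', hmove, rfl⟩
    obtain ⟨hpos', hsum', hcard'⟩ := move_facts hpos hmove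
    rcases hcard' with ⟨hc, hle⟩ | ⟨hc, hle⟩
    · left
      have hr1 : 1 ≤ r := by omega
      exact ⟨hr1, IH (r-1) (by omega) H' hpos' (by omega)⟩
    · right
      have hr2 : 2 ≤ r := by omega
      exact ⟨hr2, IH (r-2) (by omega) H' hpos' (by omega)⟩
  -- if r ≥ 1, the value (r-1)%3 is realized
  have hex1 : 1 ≤ r → (r-1) % 3 ∈ S := by
    intro hr
    obtain ⟨h, hh, h2⟩ := exists_big H hpos (by omega)
    refine ⟨H.erase h + {1, h-1}, Or.inl ⟨h, 1, h-1, hh, by omega, by omega, by omega, rfl⟩, ?_⟩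
    obtain ⟨hs, hcd⟩ := erase_sum_card hh
    refine (IH (r-1) (by omega) _ ?_ ?_).symm
    · intro x hx
      rcases Multiset.mem_add.1 hx with hx | hx
      · exact hpos x (Multiset.mem_of_mem_erase hx)
      · simp only [Multiset.insert_eq_cons, Multiset.mem_cons, Multiset.mem_singleton] at hx
        omega
    · simp only [Multiset.sum_add, Multiset.card_add, Multiset.insert_eq_cons,
        Multiset.sum_cons, Multiset.card_cons, Multiset.sum_singleton, Multiset.card_singleton]
      omega
  -- if r ≥ 2, the value (r-2)%3 is realized
  have hex2 : 2 ≤ r → (r-2) % 3 ∈ S := by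
    intro hr
    by_cases h3 : ∃ h ∈ H, 3 ≤ h
    · obtain ⟨h, hh, hge⟩ := h3
      refine ⟨H.erase h + {1, 1, h-2},
        Or.inr (Or.inl ⟨h, 1, 1, h-2, hh, by omega, by omega, by omega, by omega, rfl⟩), ?_⟩
      obtain ⟨hs, hcd⟩ := erase_sum_card hh
      refine (IH (r-2) (by omega) _ ?_ ?_).symm
      · intro x hx
        rcases Multiset.mem_add.1 hx with hx | hx
        · exact hpos x (Multiset.mem_of_mem_erase hx)
        · simp only [Multiset.insert_eq_cons, Multiset.mem_cons, Multiset.mem_singleton] at hx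
          omega
      · simp only [Multiset.sum_add, Multiset.card_add, Multiset.insert_eq_cons,
          Multiset.sum_cons, Multiset.card_cons, Multiset.sum_singleton, Multiset.card_singleton]
        omega
    · -- all heaps ≤ 2: find two heaps of size ≥ 2
      push_neg at h3
      obtain ⟨h, hh, h2⟩ := exists_big H hpos (by omega)
      obtain ⟨hs, hcd⟩ := erase_sum_card hh
      have hh2 : h = 2 := by have := h3 h hh; omega
      obtain ⟨k, hk, k2⟩ := exists_big (H.erase h)
        (fun x hx => hpos x (Multiset.mem_of_mem_erase hx)) (by omega)
      refine ⟨(H.erase h).erase k + {1, 1, 1, k-1},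
        Or.inr (Or.inr ⟨h, k, 1, 1, 1, k-1, hh, hk, by omega, by omega, by omega, by omega,
          by omega, by omega, rfl⟩), ?_⟩
      obtain ⟨hs2, hcd2⟩ := erase_sum_card hk
      refine (IH (r-2) (by omega) _ ?_ ?_).symm
      · intro x hx
        rcases Multiset.mem_add.1 hx with hx | hx
        · exact hpos x (Multiset.mem_of_mem_erase (Multiset.mem_of_mem_erase hx))
        · simp only [Multiset.insert_eq_cons, Multiset.mem_cons, Multiset.mem_singleton] at hx
          omega
      · simp only [Multiset.sum_add, Multiset.card_add, Multiset.insert_eq_cons,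
          Multiset.sum_cons, Multiset.card_cons, Multiset.sum_singleton, Multiset.card_singleton]
        omega
  apply mex_eq
  · intro hmem
    rcases hoptval _ hmem with ⟨hr, he⟩ | ⟨hr, he⟩ <;> omega
  · intro j hj
    have : (1 ≤ r ∧ j = (r-1) % 3) ∨ (2 ≤ r ∧ j = (r-2) % 3) := by omega
    rcases this with ⟨hr, rfl⟩ | ⟨hr, rfl⟩
    · exact hex1 hr
    · exact hex2 hr

/-- In GA2, a three-heap position with heaps of sizes `h₁, h₂, h₃ ≥ 1` has
Grundy value `(h₁ + h₂ + h₃) mod 3`. -/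
theorem ga2_grundy_three_heaps
    (g : Multiset ℕ → ℕ)
    (hg : ∀ H, g H = mex {m | ∃ H', ga2Move H H' ∧ m = g H'})
    (h₁ h₂ h₃ : ℕ) (hh₁ : 1 ≤ h₁) (hh₂ : 1 ≤ h₂) (hh₃ : 1 ≤ h₃) :
    g ({h₁, h₂, h₃} : Multiset ℕ) = (h₁ + h₂ + h₃) % 3 := by
  have hsum : ({h₁, h₂, h₃} : Multiset ℕ).sum = h₁ + h₂ + h₃ := by
    simp [Multiset.insert_eq_cons]; ring
  have hcard : ({h₁, h₂, h₃} : Multiset ℕ).card = 3 := by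
    simp [Multiset.insert_eq_cons]
  have := ga2_grundy g hg (h₁ + h₂ + h₃ - 3) {h₁, h₂, h₃}
    (by intro x hx; simp [Multiset.insert_eq_cons] at hx; rcases hx with rfl | rfl | rfl <;> omega)
    (by omega)
  rw [this]
  omega
end

section
/- For every position P of Crossover-Mutation there exists a finite simple graph G such that the Arc Kayles position on G is equivalent to P: the Arc Kayles game on G has the same Grundy value as P (equivalently, the disjunctive sum of the two games is a second-player win under normal play). -/
/-- The legal moves of Crossover-Mutation: positions are pairs of bit strings of the same
length `n`.  A crossover move chooses `k` with `1 ≤ k ≤ n-1` and swaps the length-`k`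
prefixes of the two strings; a mutation move flips a single bit of either string.  A move is
legal only if it strictly increases the total entropy. -/
def cmMove (P P' : List Bool × List Bool) : Prop :=
  ((∃ k, 1 ≤ k ∧ k ≤ P.1.length - 1 ∧
      P'.1 = P.2.take k ++ P.1.drop k ∧ P'.2 = P.1.take k ++ P.2.drop k) ∨
   (∃ i, i < P.1.length ∧ P'.1 = P.1.set i (!(P.1.getD i false)) ∧ P'.2 = P.2) ∨
   (∃ i, i < P.2.length ∧ P'.1 = P.1 ∧ P'.2 = P.2.set i (!(P.2.getD i false)))) ∧
  entropy P.1 + entropy P.2 < entropy P'.1 + entropy P'.2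

/-- The moves of Arc Kayles on a simple graph: choose an edge `uv` and remove it together
with every edge sharing an endpoint with it. -/
def arcKaylesMove {V : Type} (G G' : SimpleGraph V) : Prop :=
  ∃ u v : V, G.Adj u v ∧
    ∀ x y : V, G'.Adj x y ↔ (G.Adj x y ∧ x ≠ u ∧ x ≠ v ∧ y ≠ u ∧ y ≠ v)

/-!
Index the boundaries of a bit string of length `n` by `0, …, n`, boundary `t` lying between bits
`t - 1` and `t`; an inner boundary is *cut* when the bits on either side differ, and the entropy
counts the cuts. Flipping bit `j` toggles the inner boundaries among `j, j + 1`, so it raises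
the entropy exactly when there is such a boundary and none of them is cut; a crossover at `k`
changes only boundary `k` of both strings, and raises the entropy exactly when both are uncut and
the strings differ there. Hence the legal moves are the edges of a graph on the boundaries of the
two rows, and a move cuts precisely the inner boundaries among its endpoints, which never heal:
playing the move deletes its two endpoints (a crossover also exchanges the rows to the left of
`k`, which a graph isomorphism absorbs). So Arc Kayles on that graph mirrors Crossover-Mutation
move for move, and well-founded induction on the Arc Kayles position shows that mirrored
positions have the same Grundy value.
-/

def IsGrundy {α : Type*} (move : α → α → Prop) (g : α → ℕ) : Prop :=
  ∀ a, g a = mex {x | ∃ a', move a a' ∧ x = g a'}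

theorem IsGrundy.eq_of_bisim {α β : Type*} {moveα : α → α → Prop} {moveβ : β → β → Prop}
    {gα : α → ℕ} {gβ : β → ℕ} (hα : IsGrundy moveα gα) (hβ : IsGrundy moveβ gβ)
    (hwf : WellFounded (flip moveβ)) (R : α → β → Prop)
    (hfwd : ∀ a b, R a b → ∀ a', moveα a a' → ∃ b', moveβ b b' ∧ R a' b')
    (hbwd : ∀ a b, R a b → ∀ b', moveβ b b' → ∃ a', moveα a a' ∧ R a' b')
    {a : α} {b : β} (hab : R a b) : gα a = gβ b := by
  induction b using hwf.induction generalizing a with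
  | _ b ih =>
    rw [hα, hβ]
    congr 1
    ext x
    constructor
    · rintro ⟨a', ha', rfl⟩
      obtain ⟨b', hb', hR⟩ := hfwd a b hab a' ha'
      exact ⟨b', hb', ih b' hb' hR⟩
    · rintro ⟨b', hb', rfl⟩
      obtain ⟨a', ha', hR⟩ := hbwd a b hab b' hb'
      exact ⟨a', ha', (ih b' hb' hR).symm⟩

theorem SimpleGraph.deleteIncidenceSet_comm {V : Type*} (G : SimpleGraph V) (u v : V) :
    (G.deleteIncidenceSet u).deleteIncidenceSet v =
      (G.deleteIncidenceSet v).deleteIncidenceSet u := by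
  ext
  simp only [SimpleGraph.deleteIncidenceSet_adj]
  tauto

section ArcKayles

variable {V W : Type} {G G' : SimpleGraph V} {H : SimpleGraph W}

theorem arcKaylesMove_iff :
    arcKaylesMove G G' ↔ ∃ u v, G.Adj u v ∧ G' = (G.deleteIncidenceSet u).deleteIncidenceSet v := by
  refine exists₂_congr fun u v => and_congr_right fun _ => ?_
  simp only [SimpleGraph.ext_iff, funext_iff, SimpleGraph.deleteIncidenceSet_adj, eq_iff_iff]
  exact forall₂_congr fun x y => by tauto

theorem arcKaylesMove.lt (h : arcKaylesMove G G') : G' < G := by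
  obtain ⟨u, v, huv, hG'⟩ := h
  refine lt_of_le_of_ne (fun x y hxy => ((hG' x y).1 hxy).1) fun h => ?_
  subst h
  exact ((hG' u v).1 huv).2.1 rfl

theorem wellFounded_arcKaylesMove [Finite V] :
    WellFounded (flip (arcKaylesMove : SimpleGraph V → SimpleGraph V → Prop)) :=
  Subrelation.wf (fun h => arcKaylesMove.lt h) wellFounded_lt

theorem SimpleGraph.Iso.exists_arcKaylesMove (e : G ≃g H) {H' : SimpleGraph W}
    (h : arcKaylesMove H H') : ∃ G', arcKaylesMove G G' ∧ Nonempty (G' ≃g H') := by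
  obtain ⟨u, v, huv, hH'⟩ := h
  refine ⟨(G.deleteIncidenceSet (e.symm u)).deleteIncidenceSet (e.symm v),
    arcKaylesMove_iff.2 ⟨e.symm u, e.symm v, e.symm.map_adj_iff.2 huv, rfl⟩, ⟨⟨e.toEquiv, ?_⟩⟩⟩
  intro x y
  change H'.Adj (e x) (e y) ↔ _
  simp only [SimpleGraph.deleteIncidenceSet_adj, hH', e.map_adj_iff, ne_eq, e.eq_symm_apply]
  tauto

end ArcKayles

theorem Finset.sum_lt_sum_iff_of_subset {ι M : Type*} [DecidableEq ι] [AddCommMonoid M]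
    [PartialOrder M] [IsOrderedCancelAddMonoid M] {s T : Finset ι} {f g : ι → M} (hT : T ⊆ s)
    (hfg : ∀ i ∈ s \ T, f i = g i) :
    ∑ i ∈ s, f i < ∑ i ∈ s, g i ↔ ∑ i ∈ T, f i < ∑ i ∈ T, g i := by
  rw [← Finset.sum_sdiff hT, ← Finset.sum_sdiff hT (f := g), Finset.sum_congr rfl hfg,
    add_lt_add_iff_left]

def IsCut (A : List Bool) (t : ℕ) : Prop :=
  0 < t ∧ t < A.length ∧ A.getD (t - 1) false ≠ A.getD t false

instance (A : List Bool) : DecidablePred (IsCut A) := fun _ => by unfold IsCut; infer_instance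

theorem not_isCut_zero (A : List Bool) : ¬IsCut A 0 := fun h => h.1.false

theorem isCut_cons_cons_one (a b : Bool) (l : List Bool) : IsCut (a :: b :: l) 1 ↔ a ≠ b := by
  simp [IsCut]

theorem isCut_cons_cons_add_two (a b : Bool) (l : List Bool) (t : ℕ) :
    IsCut (a :: b :: l) (t + 2) ↔ IsCut (b :: l) (t + 1) := by
  simp [IsCut]

theorem entropy_cons_cons (a b : Bool) (l : List Bool) :
    entropy (a :: b :: l) = entropy (b :: l) + if a ≠ b then 1 else 0 := by
  simp [entropy, List.countP_cons]

theorem entropy_eq_sum_isCut (A : List Bool) :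
    entropy A = ∑ t ∈ Finset.range (A.length + 1), if IsCut A t then 1 else 0 := by
  induction A with
  | nil => rfl
  | cons a l ih =>
    cases l with
    | nil => cases a <;> decide
    | cons b l =>
      rw [List.length_cons, List.length_cons, Finset.sum_range_succ', Finset.sum_range_succ']
      rw [List.length_cons, Finset.sum_range_succ'] at ih
      simp only [isCut_cons_cons_add_two, zero_add, isCut_cons_cons_one, not_isCut_zero,
        entropy_cons_cons, ih]
      simp

def flipBit (A : List Bool) (j : ℕ) : List Bool := A.set j (!A.getD j false)

@[simp] theorem length_flipBit (A : List Bool) (j : ℕ) : (flipBit A j).length = A.length :=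
  List.length_set

theorem getD_flipBit {A : List Bool} {j : ℕ} (hj : j < A.length) (i : ℕ) :
    (flipBit A j).getD i false = if i = j then !A.getD j false else A.getD i false := by
  rcases eq_or_ne i j with rfl | h
  · simp [flipBit, hj]
  · simp [flipBit, h, Ne.symm h]

theorem isCut_flipBit {A : List Bool} {j : ℕ} (hj : j < A.length) (t : ℕ) :
    IsCut (flipBit A j) t ↔
      if t = j ∨ t = j + 1 then 0 < t ∧ t < A.length ∧ ¬IsCut A t else IsCut A t := by
  simp only [IsCut, getD_flipBit hj, length_flipBit]
  split_ifs <;> grind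

theorem entropy_lt_entropy_flipBit_iff {A : List Bool} {j : ℕ} (hj : j < A.length) :
    entropy A < entropy (flipBit A j) ↔ 2 ≤ A.length ∧ ¬IsCut A j ∧ ¬IsCut A (j + 1) := by
  have hsub : {j, j + 1} ⊆ Finset.range (A.length + 1) := by
    intro i; simp only [Finset.mem_insert, Finset.mem_singleton, Finset.mem_range]; omega
  rw [entropy_eq_sum_isCut, entropy_eq_sum_isCut, length_flipBit,
    Finset.sum_lt_sum_iff_of_subset hsub, Finset.sum_pair (by omega), Finset.sum_pair (by omega)]
  · simp only [isCut_flipBit hj, true_or, or_true, if_true]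
    have h0 : IsCut A j → 0 < j := fun h => h.1
    have h1 : IsCut A (j + 1) → j + 1 < A.length := fun h => h.2.1
    by_cases c0 : IsCut A j <;> by_cases c1 : IsCut A (j + 1) <;> simp [c0, c1] <;>
      split_ifs <;> omega
  · intro i hi
    simp only [Finset.mem_sdiff, Finset.mem_insert, Finset.mem_singleton] at hi
    simp only [isCut_flipBit hj, if_neg hi.2]

theorem getD_take_append_drop {A B : List Bool} {k : ℕ} (hk : k ≤ B.length) (i : ℕ) :
    (B.take k ++ A.drop k).getD i false = if i < k then B.getD i false else A.getD i false := by
  simp only [List.getD_eq_getElem?_getD, List.getElem?_append, List.length_take,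
    Nat.min_eq_left hk, List.getElem?_take, List.getElem?_drop]
  split_ifs <;> first | rfl | (congr 2; omega)

theorem length_take_append_drop {A B : List Bool} {k : ℕ} (hAB : A.length = B.length)
    (hk : k ≤ A.length) : (B.take k ++ A.drop k).length = A.length := by
  simp; omega

theorem isCut_take_append_drop {A B : List Bool} {k : ℕ} (hAB : A.length = B.length)
    (hk : k ≤ A.length) (t : ℕ) :
    IsCut (B.take k ++ A.drop k) t ↔
      if t < k then IsCut B t
      else if t = k then 0 < k ∧ k < A.length ∧ B.getD (k - 1) false ≠ A.getD k false
      else IsCut A t := by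
  simp only [IsCut, length_take_append_drop hAB hk, getD_take_append_drop (hAB ▸ hk)]
  split_ifs <;> grind

theorem entropy_lt_entropy_crossover_iff {A B : List Bool} {k : ℕ} (hAB : A.length = B.length)
    (hk0 : 0 < k) (hk : k < A.length) :
    entropy A + entropy B < entropy (B.take k ++ A.drop k) + entropy (A.take k ++ B.drop k) ↔
      ¬IsCut A k ∧ ¬IsCut B k ∧ A.getD k false ≠ B.getD k false := by
  have hsub : {k} ⊆ Finset.range (A.length + 1) := by simp; omega
  simp only [entropy_eq_sum_isCut, length_take_append_drop hAB hk.le,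
    length_take_append_drop hAB.symm (hAB ▸ hk.le), ← hAB, ← Finset.sum_add_distrib]
  rw [Finset.sum_lt_sum_iff_of_subset hsub, Finset.sum_singleton, Finset.sum_singleton]
  · simp only [isCut_take_append_drop hAB hk.le, isCut_take_append_drop hAB.symm (hAB ▸ hk.le),
      lt_self_iff_false, if_false, if_true]
    simp only [IsCut, ← hAB, hk0, hk, true_and]
    generalize A.getD (k - 1) false = a; generalize A.getD k false = a'
    generalize B.getD (k - 1) false = b; generalize B.getD k false = b'
    revert a a' b b'; decide
  · intro i hi
    simp only [Finset.mem_sdiff, Finset.mem_singleton] at hi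
    simp only [isCut_take_append_drop hAB hk.le, isCut_take_append_drop hAB.symm (hAB ▸ hk.le),
      if_neg hi.2]
    split_ifs <;> omega

def row (P : List Bool × List Bool) (r : Bool) : List Bool := bif r then P.2 else P.1

def crossover (P : List Bool × List Bool) (k : ℕ) : List Bool × List Bool :=
  (P.2.take k ++ P.1.drop k, P.1.take k ++ P.2.drop k)

def mutate (P : List Bool × List Bool) (r : Bool) (j : ℕ) : List Bool × List Bool :=
  bif r then (P.1, flipBit P.2 j) else (flipBit P.1 j, P.2)

def CrossoverLegal (P : List Bool × List Bool) (k : ℕ) : Prop :=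
  0 < k ∧ k < P.1.length ∧ ¬IsCut P.1 k ∧ ¬IsCut P.2 k ∧ P.1.getD k false ≠ P.2.getD k false

def MutationLegal (P : List Bool × List Bool) (r : Bool) (j : ℕ) : Prop :=
  2 ≤ (row P r).length ∧ ¬IsCut (row P r) j ∧ ¬IsCut (row P r) (j + 1)

theorem cmMove_iff {P P' : List Bool × List Bool} (hP : P.1.length = P.2.length) :
    cmMove P P' ↔ (∃ k, CrossoverLegal P k ∧ P' = crossover P k) ∨
      ∃ r j, j < P.1.length ∧ MutationLegal P r j ∧ P' = mutate P r j := by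
  obtain ⟨A, B⟩ := P
  obtain ⟨A', B'⟩ := P'
  dsimp only at hP
  dsimp only [cmMove, CrossoverLegal]
  have hB {j : ℕ} (hj : j < B.length) :=
    (add_lt_add_iff_left (entropy A)).trans (entropy_lt_entropy_flipBit_iff hj)
  have hA {j : ℕ} (hj : j < A.length) :=
    (add_lt_add_iff_right (entropy B)).trans (entropy_lt_entropy_flipBit_iff hj)
  constructor
  · rintro ⟨⟨k, hk1, hk2, rfl, rfl⟩ | ⟨j, hj, rfl, rfl⟩ | ⟨j, hj, rfl, rfl⟩, hlt⟩
    · exact Or.inl ⟨k, ⟨by omega, by omega,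
        (entropy_lt_entropy_crossover_iff hP (by omega) (by omega)).1 hlt⟩, rfl⟩
    · exact Or.inr ⟨false, j, hj, (hA hj).1 hlt, rfl⟩
    · exact Or.inr ⟨true, j, hP ▸ hj, (hB hj).1 hlt, rfl⟩
  · rintro (⟨k, ⟨hk0, hk, hlegal⟩, hP'⟩ | ⟨_ | _, j, hj, hlegal, hP'⟩) <;>
      simp only [crossover, mutate, cond_false, cond_true, Prod.mk.injEq] at hP' <;>
      obtain ⟨rfl, rfl⟩ := hP'
    · exact ⟨Or.inl ⟨k, by omega, by omega, rfl, rfl⟩,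
        (entropy_lt_entropy_crossover_iff hP hk0 hk).2 hlegal⟩
    · exact ⟨Or.inr (Or.inl ⟨j, hj, rfl, rfl⟩), (hA hj).2 hlegal⟩
    · exact ⟨Or.inr (Or.inr ⟨j, hP ▸ hj, rfl, rfl⟩), (hB (hP ▸ hj)).2 hlegal⟩

/-- Vertex `(r, t)` is boundary `t` of row `r`. The edges are the legal moves: flipping bit `j`
of row `r` joins `(r, j)` and `(r, j + 1)`, a crossover at `k` joins `(false, k)` and
`(true, k)`. -/
def cmGraph (n : ℕ) (P : List Bool × List Bool) : SimpleGraph (Bool × Fin (n + 1)) where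
  Adj u v :=
    u.1 = v.1 ∧ ((u.2 : ℕ) + 1 = v.2 ∧ MutationLegal P u.1 u.2 ∨
      (v.2 : ℕ) + 1 = u.2 ∧ MutationLegal P u.1 v.2) ∨
    u.1 ≠ v.1 ∧ u.2 = v.2 ∧ CrossoverLegal P u.2
  symm := ⟨fun u v h => by grind⟩
  loopless := ⟨fun u h => by grind⟩

theorem cmGraph_deleteIncidenceSet_mutate {n : ℕ} {P : List Bool × List Bool} {r : Bool} {j : ℕ}
    (h1 : P.1.length = n) (h2 : P.2.length = n) (hj : j < n) (hlegal : MutationLegal P r j) :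
    ((cmGraph n P).deleteIncidenceSet (r, ⟨j, by omega⟩)).deleteIncidenceSet
      (r, ⟨j + 1, by omega⟩) = cmGraph n (mutate P r j) := by
  ext ⟨r1, t1⟩ ⟨r2, t2⟩
  obtain ⟨hn, hj0, hj1⟩ := hlegal
  have hA : j < P.1.length := h1 ▸ hj
  have hB : j < P.2.length := h2 ▸ hj
  cases r <;> cases r1 <;> cases r2 <;>
    simp only [SimpleGraph.deleteIncidenceSet_adj, cmGraph, MutationLegal, CrossoverLegal, row,
      mutate, cond_true, cond_false, ne_eq, Prod.mk.injEq, Fin.ext_iff, length_flipBit,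
      isCut_flipBit hA, isCut_flipBit hB, getD_flipBit hA, getD_flipBit hB, h1, h2]
      at hn hj0 hj1 ⊢ <;>
    grind

def swapRowsBelow (n k : ℕ) : Equiv.Perm (Bool × Fin (n + 1)) :=
  Function.Involutive.toPerm (fun v => (if (v.2 : ℕ) < k then !v.1 else v.1, v.2)) fun v => by
    simp only
    split_ifs <;> simp

@[simp] theorem swapRowsBelow_apply (n k : ℕ) (r : Bool) (t : Fin (n + 1)) :
    swapRowsBelow n k (r, t) = (if (t : ℕ) < k then !r else r, t) := rfl

def cmGraphCrossoverIso {n : ℕ} {P : List Bool × List Bool} {k : Fin (n + 1)}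
    (h1 : P.1.length = n) (h2 : P.2.length = n) (hlegal : CrossoverLegal P k) :
    ((cmGraph n P).deleteIncidenceSet (false, k)).deleteIncidenceSet (true, k) ≃g
      cmGraph n (crossover P k) where
  toEquiv := swapRowsBelow n k
  map_rel_iff' {u v} := by
    obtain ⟨r1, t1⟩ := u
    obtain ⟨r2, t2⟩ := v
    obtain ⟨hk0, hk, hA, hB, hAB⟩ := hlegal
    have hlen : P.1.length = P.2.length := h1.trans h2.symm
    have hA' : P.1.getD (k - 1) false = P.1.getD k false := not_not.1 fun h => hA ⟨hk0, hk, h⟩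
    have hB' : P.2.getD (k - 1) false = P.2.getD k false :=
      not_not.1 fun h => hB ⟨hk0, hlen ▸ hk, h⟩
    cases r1 <;> cases r2 <;> by_cases ht1 : t1 < k <;> by_cases ht2 : t2 < k <;>
    simp only [SimpleGraph.deleteIncidenceSet_adj, cmGraph, MutationLegal, CrossoverLegal, row,
      crossover, swapRowsBelow_apply, Fin.val_fin_lt, ht1, ht2, if_true, if_false, Bool.not_true,
      Bool.not_false, cond_true, cond_false, ne_eq, Prod.mk.injEq, Fin.ext_iff,
      length_take_append_drop hlen hk.le, length_take_append_drop hlen.symm (hlen ▸ hk.le),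
      isCut_take_append_drop hlen hk.le, isCut_take_append_drop hlen.symm (hlen ▸ hk.le),
      getD_take_append_drop (hlen ▸ hk.le), getD_take_append_drop hk.le, h1, h2] <;>
    grind

theorem cmGraph_adj_crossover {n : ℕ} {P : List Bool × List Bool} {k : Fin (n + 1)}
    (hk : CrossoverLegal P k) : (cmGraph n P).Adj (false, k) (true, k) :=
  Or.inr ⟨Bool.false_ne_true, rfl, hk⟩

theorem cmGraph_adj_mutate {n : ℕ} {P : List Bool × List Bool} {r : Bool} {j : ℕ} (hj : j < n)
    (hlegal : MutationLegal P r j) :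
    (cmGraph n P).Adj (r, ⟨j, by omega⟩) (r, ⟨j + 1, by omega⟩) :=
  Or.inl ⟨rfl, Or.inl ⟨rfl, hlegal⟩⟩

theorem cmMove.length_eq {n : ℕ} {P P' : List Bool × List Bool} (h1 : P.1.length = n)
    (h2 : P.2.length = n) (h : cmMove P P') : P'.1.length = n ∧ P'.2.length = n := by
  rcases h with ⟨⟨k, -, hk, e1, e2⟩ | ⟨i, -, e1, e2⟩ | ⟨i, -, e1, e2⟩, -⟩ <;> rw [e1, e2]
  · simp only [List.length_append, List.length_take, List.length_drop]; omega
  all_goals simp [h1, h2]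

theorem exists_arcKaylesMove_cmGraph {n : ℕ} {P P' : List Bool × List Bool}
    (h1 : P.1.length = n) (h2 : P.2.length = n) (h : cmMove P P') :
    ∃ H, arcKaylesMove (cmGraph n P) H ∧ Nonempty (H ≃g cmGraph n P') := by
  rcases (cmMove_iff (h1.trans h2.symm)).1 h with ⟨k, hk, rfl⟩ | ⟨r, j, hj, hlegal, rfl⟩
  · have hkn : k < n + 1 := by have := hk.2.1; omega
    exact ⟨_, arcKaylesMove_iff.2 ⟨_, _, cmGraph_adj_crossover (k := ⟨k, hkn⟩) hk, rfl⟩,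
      ⟨cmGraphCrossoverIso (k := ⟨k, hkn⟩) h1 h2 hk⟩⟩
  · exact ⟨_, arcKaylesMove_iff.2 ⟨_, _, cmGraph_adj_mutate (h1 ▸ hj) hlegal,
      (cmGraph_deleteIncidenceSet_mutate h1 h2 (h1 ▸ hj) hlegal).symm⟩, ⟨.refl⟩⟩

theorem exists_cmMove_of_arcKaylesMove_cmGraph {n : ℕ} {P : List Bool × List Bool}
    {H : SimpleGraph (Bool × Fin (n + 1))} (h1 : P.1.length = n) (h2 : P.2.length = n)
    (h : arcKaylesMove (cmGraph n P) H) :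
    ∃ P', cmMove P P' ∧ Nonempty (H ≃g cmGraph n P') := by
  have hP := h1.trans h2.symm
  have mutation (r : Bool) (a b : Fin (n + 1)) (hab : (a : ℕ) + 1 = b)
      (hlegal : MutationLegal P r a) : ∃ P', cmMove P P' ∧
        Nonempty (((cmGraph n P).deleteIncidenceSet (r, a)).deleteIncidenceSet (r, b) ≃g
          cmGraph n P') := by
    refine ⟨_, (cmMove_iff hP).2 (Or.inr ⟨r, a, by rw [h1]; omega, hlegal, rfl⟩), ?_⟩
    rw [show b = ⟨a + 1, by omega⟩ from Fin.ext hab.symm,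
      cmGraph_deleteIncidenceSet_mutate h1 h2 (by omega) hlegal]
    exact ⟨.refl⟩
  have crossover (a : Fin (n + 1)) (hlegal : CrossoverLegal P a) : ∃ P', cmMove P P' ∧
      Nonempty (((cmGraph n P).deleteIncidenceSet (false, a)).deleteIncidenceSet (true, a) ≃g
        cmGraph n P') :=
    ⟨_, (cmMove_iff hP).2 (Or.inl ⟨a, hlegal, rfl⟩), ⟨cmGraphCrossoverIso h1 h2 hlegal⟩⟩
  obtain ⟨⟨r, a⟩, ⟨r', b⟩, huv, rfl⟩ := arcKaylesMove_iff.1 h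
  rcases huv with ⟨rfl, ⟨hab, hlegal⟩ | ⟨hab, hlegal⟩⟩ | ⟨hr, rfl, hlegal⟩
  · exact mutation r a b hab hlegal
  · rw [SimpleGraph.deleteIncidenceSet_comm]
    exact mutation r b a hab hlegal
  · cases r <;> cases r' <;> simp only [ne_eq, not_true_eq_false] at hr
    · exact crossover a hlegal
    · rw [SimpleGraph.deleteIncidenceSet_comm]
      exact crossover a hlegal

theorem grundy_eq_of_iso_cmGraph {gCM : List Bool × List Bool → ℕ} (hCM : IsGrundy cmMove gCM)
    {V : Type} [Finite V] {gAK : SimpleGraph V → ℕ} (hAK : IsGrundy arcKaylesMove gAK) {n : ℕ}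
    {P : List Bool × List Bool} (h1 : P.1.length = n) (h2 : P.2.length = n) {G : SimpleGraph V}
    (e : G ≃g cmGraph n P) : gCM P = gAK G := by
  refine hCM.eq_of_bisim hAK wellFounded_arcKaylesMove
    (fun P G => P.1.length = n ∧ P.2.length = n ∧ Nonempty (G ≃g cmGraph n P)) ?_ ?_
    ⟨h1, h2, ⟨e⟩⟩
  · rintro P G ⟨h1, h2, ⟨e⟩⟩ P' hP'
    obtain ⟨H, hH, ⟨eH⟩⟩ := exists_arcKaylesMove_cmGraph h1 h2 hP'
    obtain ⟨G', hG', ⟨eG'⟩⟩ := e.exists_arcKaylesMove hH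
    obtain ⟨h1', h2'⟩ := hP'.length_eq h1 h2
    exact ⟨G', hG', h1', h2', ⟨eG'.trans eH⟩⟩
  · rintro P G ⟨h1, h2, ⟨e⟩⟩ G' hG'
    obtain ⟨H, hH, ⟨eH⟩⟩ := e.symm.exists_arcKaylesMove hG'
    obtain ⟨P', hP', ⟨eP'⟩⟩ := exists_cmMove_of_arcKaylesMove_cmGraph h1 h2 hH
    obtain ⟨h1', h2'⟩ := hP'.length_eq h1 h2
    exact ⟨P', hP', h1', h2', ⟨eH.symm.trans eP'⟩⟩

/-- For every position `P` of Crossover-Mutation there exists a finite simple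
graph `G` (on some `Fin m`) such that the Arc Kayles position on `G` is equivalent to `P`:
the Arc Kayles game on `G` has the same Grundy value as `P`.  Here `gCM` and `gAK` are the
Grundy functions of the two games, characterized by their mex recurrences. -/
theorem cm_equivalent_to_arc_kayles
    (gCM : List Bool × List Bool → ℕ)
    (hCM : ∀ P, gCM P = mex {m | ∃ P', cmMove P P' ∧ m = gCM P'})
    (gAK : (m : ℕ) → SimpleGraph (Fin m) → ℕ)
    (hAK : ∀ (m : ℕ) (G : SimpleGraph (Fin m)),
      gAK m G = mex {x | ∃ G', arcKaylesMove G G' ∧ x = gAK m G'})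
    (B₁ B₂ : List Bool) (hlen : B₁.length = B₂.length) :
    ∃ (m : ℕ) (G : SimpleGraph (Fin m)), gAK m G = gCM (B₁, B₂) := by
  let e := Fintype.equivFin (Bool × Fin (B₁.length + 1))
  exact ⟨_, _, (grundy_eq_of_iso_cmGraph hCM (hAK _) rfl hlen.symm
    (SimpleGraph.Iso.map e (cmGraph B₁.length (B₁, B₂))).symm).symm⟩
end

section
/- For k ∈ {0,1}, the Arc Kayles positions on the graphs G(2k+1) (the 2×(2k+1) grid graph with one pendant edge at each of three corners) and G⁺(2k+1) (with one pendant edge at each of all four corners) each have Grundy value 2 (game value *2). -/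
/-- The 2×n grid graph: vertices `Fin 2 × Fin n`, adjacent when they differ by 1 in exactly
one coordinate. -/
def grid2 (n : ℕ) : SimpleGraph (Fin 2 × Fin n) :=
  (SimpleGraph.pathGraph 2).boxProd (SimpleGraph.pathGraph n)

/-- The four corner vertices of the 2×(m+1) grid graph: (row 1, col 1), (row 2, col 1),
(row 1, col m+1), (row 2, col m+1). -/
def corner (m : ℕ) : Fin 4 → Fin 2 × Fin (m + 1) :=
  ![(0, 0), (1, 0), (0, Fin.last m), (1, Fin.last m)]

/-- The 2×(m+1) grid graph with `p` pendant vertices, pendant vertex `j` being attached at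
the corner `corner m (c j)`.  With `p = 3` and `c` injective this is `G(m+1)` (a pendant
edge at each of three of the four corners); with `p = 4` and `c` injective it is `G⁺(m+1)`
(a pendant edge at each of the four corners). -/
def gridCorners (m p : ℕ) (c : Fin p → Fin 4) :
    SimpleGraph ((Fin 2 × Fin (m + 1)) ⊕ Fin p) :=
  SimpleGraph.fromRel fun x y =>
    match x, y with
    | Sum.inl a, Sum.inl b => (grid2 (m + 1)).Adj a b
    | Sum.inl a, Sum.inr j => corner m (c j) = a
    | _, _ => False

/-!
An Arc Kayles position is determined by its edge set, and a move deletes from a list of its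
edges exactly those sharing an endpoint with the chosen one. Hence any function satisfying the
mex recursion agrees, on a graph whose edges are listed by `l`, with the recursion evaluated on
`l`. The graphs `G(1)`, `G⁺(1)`, `G(3)` and `G⁺(3)` have at
most 11 edges, so that evaluation is carried out by the kernel.
-/

namespace ArcKayles

theorem mex_eq_of_notMem {S : Set ℕ} {n : ℕ} (hn : n ∉ S) (hlt : ∀ m < n, m ∈ S) :
    mex S = n :=
  le_antisymm (Nat.sInf_le hn) (le_csInf ⟨n, hn⟩ fun _ hm => not_lt.1 fun h => hm (hlt _ h))

/-- The least `n' ≥ n` not in `l`, provided one is found within `fuel` steps. -/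
def mexFrom (l : List ℕ) : ℕ → ℕ → ℕ
  | 0, n => n
  | fuel + 1, n => if n ∈ l then mexFrom l fuel (n + 1) else n

theorem mex_eq_mexFrom (l : List ℕ) :
    ∀ fuel n, (∀ m < n, m ∈ l) → (∃ t ∉ l, t ≤ n + fuel) → mex {x | x ∈ l} = mexFrom l fuel n
  | 0, n, hlt, ⟨t, ht, htn⟩ => by
    have htn : t = n := le_antisymm htn (not_lt.1 fun h => ht (hlt t h))
    exact mex_eq_of_notMem (htn ▸ ht) hlt
  | fuel + 1, n, hlt, ⟨t, ht, htn⟩ => by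
    by_cases hn : n ∈ l
    · rw [mexFrom, if_pos hn]
      refine mex_eq_mexFrom l fuel (n + 1) (fun m hm => ?_) ⟨t, ht, ?_⟩
      · rcases Nat.lt_succ_iff_lt_or_eq.1 hm with hm | rfl
        exacts [hlt m hm, hn]
      · have : n < t := lt_of_le_of_ne (not_lt.1 fun h => ht (hlt t h)) fun h => ht (h ▸ hn)
        omega
    · rw [mexFrom, if_neg hn]
      exact mex_eq_of_notMem hn hlt

theorem exists_notMem_le_length (l : List ℕ) : ∃ t ∉ l, t ≤ l.length := by
  have hcard : l.toFinset.card < (Finset.range (l.length + 1)).card := by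
    simpa [Nat.lt_succ_iff] using l.toFinset_card_le
  obtain ⟨t, ht, htl⟩ := Finset.exists_mem_notMem_of_card_lt_card hcard
  exact ⟨t, by simpa using htl, Nat.lt_succ_iff.1 (Finset.mem_range.1 ht)⟩

def listMex (l : List ℕ) : ℕ := mexFrom l l.length 0

theorem mex_eq_listMex (l : List ℕ) : mex {x | x ∈ l} = listMex l :=
  mex_eq_mexFrom l _ 0 (fun _ h => absurd h (Nat.not_lt_zero _))
    (by simpa using exists_notMem_le_length l)

section EdgeLists

variable {V : Type}

def IsEdgeList (G : SimpleGraph V) (l : List (V × V)) : Prop :=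
  ∀ x y, G.Adj x y ↔ (x, y) ∈ l ∨ (y, x) ∈ l

def edgeListOf (G : SimpleGraph V) [DecidableRel G.Adj] : List V → List (V × V)
  | [] => []
  | v :: vs => (vs.filter (G.Adj v ·)).map (v, ·) ++ edgeListOf G vs

theorem adj_and_mem_iff_mem_edgeListOf (G : SimpleGraph V) [DecidableRel G.Adj] (x y : V) :
    ∀ vs : List V, G.Adj x y ∧ x ∈ vs ∧ y ∈ vs ↔
      (x, y) ∈ edgeListOf G vs ∨ (y, x) ∈ edgeListOf G vs
  | [] => by simp [edgeListOf]
  | v :: vs => by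
    have ih := adj_and_mem_iff_mem_edgeListOf G x y vs
    simp only [edgeListOf, List.mem_append, List.mem_map, List.mem_filter, List.mem_cons,
      decide_eq_true_eq, Prod.mk.injEq]
    have hne := G.ne_of_adj (a := x) (b := y)
    have hsymm := G.adj_comm x y
    aesop

theorem isEdgeList_edgeListOf (G : SimpleGraph V) [DecidableRel G.Adj] {vs : List V}
    (hvs : ∀ v, v ∈ vs) : IsEdgeList G (edgeListOf G vs) := fun x y => by
  simpa [hvs] using adj_and_mem_iff_mem_edgeListOf G x y vs

theorem adj_deleteIncidenceSet_deleteIncidenceSet {G : SimpleGraph V} {u v x y : V} :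
    ((G.deleteIncidenceSet u).deleteIncidenceSet v).Adj x y ↔
      G.Adj x y ∧ x ≠ u ∧ x ≠ v ∧ y ≠ u ∧ y ≠ v := by
  simp only [SimpleGraph.deleteIncidenceSet_adj]
  tauto

theorem arcKaylesMove_deleteIncidenceSet {G : SimpleGraph V} {u v : V} (h : G.Adj u v) :
    arcKaylesMove G ((G.deleteIncidenceSet u).deleteIncidenceSet v) :=
  ⟨u, v, h, fun _ _ => adj_deleteIncidenceSet_deleteIncidenceSet⟩

variable [DecidableEq V]

def removeAdjacent (e : V × V) (l : List (V × V)) : List (V × V) :=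
  l.filter fun p => p.1 ≠ e.1 ∧ p.1 ≠ e.2 ∧ p.2 ≠ e.1 ∧ p.2 ≠ e.2

theorem length_removeAdjacent_lt {e : V × V} {l : List (V × V)} (he : e ∈ l) :
    (removeAdjacent e l).length < l.length :=
  List.length_filter_lt_length_iff_exists.2 ⟨e, he, by simp⟩

theorem IsEdgeList.removeAdjacent {G G' : SimpleGraph V} {l : List (V × V)} {u v : V}
    {e : V × V} (hl : IsEdgeList G l)
    (hG' : ∀ x y, G'.Adj x y ↔ G.Adj x y ∧ x ≠ u ∧ x ≠ v ∧ y ≠ u ∧ y ≠ v)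
    (he : e = (u, v) ∨ e = (v, u)) : IsEdgeList G' (removeAdjacent e l) := by
  intro x y
  rcases he with rfl | rfl <;>
    simp only [ArcKayles.removeAdjacent, List.mem_filter, decide_eq_true_eq, hG', hl x y] <;>
    tauto

theorem setOf_arcKaylesMove_eq {g : SimpleGraph V → ℕ} {φ : V × V → ℕ} {G : SimpleGraph V}
    {l : List (V × V)} (hl : IsEdgeList G l)
    (hφ : ∀ e ∈ l, ∀ G', IsEdgeList G' (removeAdjacent e l) → g G' = φ e) :
    {x | ∃ G', arcKaylesMove G G' ∧ x = g G'} = {x | x ∈ l.map φ} := by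
  ext x
  simp only [Set.mem_ofPred_eq, List.mem_map]
  constructor
  · rintro ⟨G', ⟨u, v, huv, hG'⟩, rfl⟩
    obtain ⟨e, he, hef⟩ : ∃ e ∈ l, e = (u, v) ∨ e = (v, u) :=
      ((hl u v).1 huv).elim (fun h => ⟨_, h, .inl rfl⟩) fun h => ⟨_, h, .inr rfl⟩
    exact ⟨e, he, (hφ e he G' (hl.removeAdjacent hG' hef)).symm⟩
  · rintro ⟨e, he, rfl⟩
    refine ⟨_, arcKaylesMove_deleteIncidenceSet ((hl _ _).2 (.inl he)), (hφ e he _ ?_).symm⟩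
    exact hl.removeAdjacent (fun _ _ => adj_deleteIncidenceSet_deleteIncidenceSet) (.inl rfl)

/-- The mex recursion on edge lists, explored to depth `fuel`; the value is exact once
`l.length ≤ fuel`, since every move shortens the list. -/
def grundyList : ℕ → List (V × V) → ℕ
  | 0, _ => 0
  | fuel + 1, l => listMex (l.map fun e => grundyList fuel (removeAdjacent e l))

theorem eq_grundyList {g : SimpleGraph V → ℕ}
    (hg : ∀ G, g G = mex {x | ∃ G', arcKaylesMove G G' ∧ x = g G'}) :
    ∀ fuel (l : List (V × V)) G, l.length ≤ fuel → IsEdgeList G l → g G = grundyList fuel l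
  | 0, l, G, hlen, hl => by
    obtain rfl := List.eq_nil_of_length_eq_zero (Nat.le_zero.1 hlen)
    rw [hg, setOf_arcKaylesMove_eq hl (φ := fun _ => 0) (by simp), mex_eq_listMex]
    rfl
  | fuel + 1, l, G, hlen, hl => by
    rw [hg, setOf_arcKaylesMove_eq hl fun e he G' hG' =>
      eq_grundyList hg fuel _ G' (by have := length_removeAdjacent_lt he; omega) hG',
      mex_eq_listMex]
    rfl

def edgeGrundy (l : List (V × V)) : ℕ := grundyList l.length l

theorem eq_edgeGrundy {g : SimpleGraph V → ℕ}
    (hg : ∀ G, g G = mex {x | ∃ G', arcKaylesMove G G' ∧ x = g G'}) {G : SimpleGraph V}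
    {l : List (V × V)} (hl : IsEdgeList G l) : g G = edgeGrundy l :=
  eq_grundyList hg _ l G le_rfl hl

end EdgeLists

end ArcKayles

instance (n : ℕ) : DecidableRel (grid2 n).Adj := fun x y =>
  decidable_of_iff (((x.1 : ℕ) + 1 = y.1 ∨ (y.1 : ℕ) + 1 = x.1) ∧ x.2 = y.2 ∨
      ((x.2 : ℕ) + 1 = y.2 ∨ (y.2 : ℕ) + 1 = x.2) ∧ x.1 = y.1)
    (by simp only [grid2, SimpleGraph.boxProd_adj, SimpleGraph.pathGraph_adj])

section GridCorners

variable {m p : ℕ} {c : Fin p → Fin 4}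

theorem gridCorners_adj_inl_inl {a b : Fin 2 × Fin (m + 1)} :
    (gridCorners m p c).Adj (.inl a) (.inl b) ↔ (grid2 (m + 1)).Adj a b := by
  simp only [gridCorners, SimpleGraph.fromRel_adj, ne_eq, Sum.inl.injEq,
    (grid2 _).adj_comm b a, or_self]
  exact ⟨And.right, fun h => ⟨h.ne, h⟩⟩

theorem gridCorners_adj_inl_inr {a : Fin 2 × Fin (m + 1)} {j : Fin p} :
    (gridCorners m p c).Adj (.inl a) (.inr j) ↔ corner m (c j) = a := by
  simp [gridCorners, SimpleGraph.fromRel_adj]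

theorem gridCorners_not_adj_inr_inr {i j : Fin p} :
    ¬ (gridCorners m p c).Adj (.inr i) (.inr j) := by
  simp [gridCorners, SimpleGraph.fromRel_adj]

end GridCorners

instance (m p : ℕ) (c : Fin p → Fin 4) : DecidableRel (gridCorners m p c).Adj
  | .inl _, .inl _ => decidable_of_iff' _ gridCorners_adj_inl_inl
  | .inl _, .inr _ => decidable_of_iff' _ gridCorners_adj_inl_inr
  | .inr _, .inl _ =>
    decidable_of_iff' _ ((gridCorners m p c).adj_comm _ _ |>.trans gridCorners_adj_inl_inr)
  | .inr _, .inr _ => .isFalse gridCorners_not_adj_inr_inr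

open ArcKayles in
/-- For `k ∈ {0,1}`, the Arc Kayles positions on `G(2k+1)` (the 2×(2k+1) grid
graph with one pendant edge at each of three corners, for any choice of three of the four
corners) and on `G⁺(2k+1)` (with one pendant edge at each of all four corners) each have
Grundy value 2 (game value `*2`). -/
theorem arc_kayles_G_odd_small (k : ℕ) (hk : k = 0 ∨ k = 1)
    (gAK : ∀ (V : Type), Fintype V → SimpleGraph V → ℕ)
    (hAK : ∀ (V : Type) (hV : Fintype V) (G : SimpleGraph V),
      gAK V hV G = mex {x | ∃ G', arcKaylesMove G G' ∧ x = gAK V hV G'}) :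
    (∀ c : Fin 3 → Fin 4, Function.Injective c →
      gAK ((Fin 2 × Fin (2 * k + 1)) ⊕ Fin 3) inferInstance
        (gridCorners (2 * k) 3 c) = 2) ∧
    gAK ((Fin 2 × Fin (2 * k + 1)) ⊕ Fin 4) inferInstance
      (gridCorners (2 * k) 4 (fun j => j)) = 2 := by
  have hgrundy (m p : ℕ) (c : Fin p → Fin 4) :
      gAK _ inferInstance (gridCorners m p c) =
        edgeGrundy (edgeListOf (gridCorners m p c) (FinEnum.toList _)) :=
    eq_edgeGrundy (hAK _ _) (isEdgeList_edgeListOf _ FinEnum.mem_toList)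
  simp only [hgrundy]
  rcases hk with rfl | rfl <;> decide
end
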